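/- Let F ∈ C^k and G ∈ C^m be cochains on the rack space complex of an X-set Y, and let Λ = P(𝟏) ∈ C¹ be the cochain with Λ(y;x) = 1 for all y,x. Then Λ∪Λ = 0, and for F ∈ C^{n-1}(Y;X): the dual of ∂⁰ is F ↦ -F∪Λ and the dual of ∂¹ is F ↦ (-1)ⁿ Λ∪F. -/

import Mathlib

/-- Zero-face `δ⁰ᵢ` of the □-set `B(Y;X)` (0-based index, lists encoding cubes). -/
def face0 {Y X : Type*} (q : Y × List X) (i : ℕ) : Y × List X :=
  (q.1, q.2.eraseIdx i)

/-- One-face `δ¹ᵢ` of the □-set `B(Y;X)`. -/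
def face1 {Y X : Type*} (star : Y → X → Y) (act : X → X → X)
    (q : Y × List X) (i : ℕ) : Y × List X :=
  match q.2[i]? with
  | some b => (star q.1 b, (q.2.take i).map (fun a => act a b) ++ q.2.drop (i + 1))
  | none => q

/-- Iterated face `δ^ε_A`: the faces of `A` applied from the largest index down. -/
def multiFace {Y X : Type*} (f : Y × List X → ℕ → Y × List X)
    (S : Finset ℕ) (q : Y × List X) : Y × List X :=
  ((S.sort (· ≤ ·)).reverse).foldl f q

/-- `ε(A)`: the sign of the shuffle putting the complement `B` before `A`. -/
def shuffleSign (S T : Finset ℕ) : ℤ :=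
  (-1) ^ (((S ×ˢ T).filter fun p => p.1 < p.2).card)

/-- The cup product of `f ∈ C^k(Y;X)` and `g ∈ C^m(Y;X)`:
`(f∪g)(x) = (-1)^{km} Σ_A ε(A) f(δ⁰_A x) g(δ¹_B x)` over subsets `A` of size `m`. -/
def cup {Y X A : Type*} [CommRing A] (star : Y → X → Y) (act : X → X → X)
    (k m : ℕ) (f g : Y × List X → A) : Y × List X → A :=
  fun q => (-1 : A) ^ (k * m) *
    ∑ S ∈ Finset.powersetCard m (Finset.range (k + m)),
      (shuffleSign S (Finset.range (k + m) \ S) : A) *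
        (f (multiFace face0 S q) *
          g (multiFace (face1 star act) (Finset.range (k + m) \ S) q))


/-! Since `Λ` vanishes off one-dimensional cubes, in `F ∪ Λ` only the subsets `A = {i}` contribute
and in `Λ ∪ F` only their complements, so both cup products collapse to alternating sums of single
faces `F(δ⁰ᵢ x)`, resp. `F(δ¹ᵢ x)`. The shuffle sign of `{i}` against the rest of `{0, …, n-1}`
is `(-1)^(n-1-i)`, resp. `(-1)^i`, which together with `(-1)^{km}` gives the signs of `∂⁰` and
`∂¹`. In particular `(Λ ∪ Λ)(x) = Λ(δ⁰₀ x) - Λ(δ⁰₁ x) = 0` on a square `x`.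
-/

open Finset

lemma Finset.sum_powersetCard_of_card_eq_succ {α β : Type*} [DecidableEq α] [AddCommMonoid β]
    {s : Finset α} {n : ℕ} (hs : #s = n + 1) (f : Finset α → β) :
    ∑ t ∈ s.powersetCard n, f t = ∑ i ∈ s, f (s \ {i}) := by
  have hinj : Set.InjOn (fun i => s \ {i}) s := fun i hi j _ hij => by
    by_contra hne
    have : i ∈ s \ {j} := mem_sdiff.mpr ⟨hi, by simpa using hne⟩
    simp [← show s \ {i} = s \ {j} from hij] at this
  rw [← sum_image hinj]
  congr 1
  ext t
  simp only [mem_powersetCard, mem_image]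
  constructor
  · rintro ⟨hts, htcard⟩
    obtain ⟨i, hi⟩ := card_eq_one.mp (show #(s \ t) = 1 by rw [card_sdiff_of_subset hts]; omega)
    exact ⟨i, mem_sdiff.mp (hi ▸ mem_singleton_self i) |>.1, by rw [← hi, sdiff_sdiff_eq_self hts]⟩
  · rintro ⟨i, hi, rfl⟩
    exact ⟨sdiff_subset, by rw [card_sdiff_of_subset (singleton_subset_iff.mpr hi)]; simp [hs]⟩

lemma neg_one_pow_mul_neg_one_pow_sub {R : Type*} [Monoid R] [HasDistribNeg R] {i k : ℕ}
    (hik : i ≤ k) : (-1 : R) ^ k * (-1) ^ (k - i) = (-1) ^ i := by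
  obtain ⟨j, rfl⟩ := Nat.exists_eq_add_of_le hik
  rw [Nat.add_sub_cancel_left, pow_add, mul_assoc, pow_mul_pow_eq_one j (by simp), mul_one]

lemma shuffleSign_singleton_range_sdiff {i n : ℕ} (hi : i < n) :
    shuffleSign {i} (range n \ {i}) = (-1) ^ (n - 1 - i) := by
  have : ({i} ×ˢ (range n \ {i})).filter (fun p => p.1 < p.2) = {i} ×ˢ Ioo i n := by
    ext ⟨a, b⟩
    simp only [mem_filter, mem_product, mem_singleton, mem_sdiff, mem_range, mem_Ioo]
    omega
  rw [shuffleSign, this, card_product, Nat.card_Ioo, card_singleton, one_mul]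
  congr 1
  omega

lemma shuffleSign_range_sdiff_singleton {i n : ℕ} (hi : i < n) :
    shuffleSign (range n \ {i}) {i} = (-1) ^ i := by
  have : ((range n \ {i}) ×ˢ {i}).filter (fun p => p.1 < p.2) = range i ×ˢ {i} := by
    ext ⟨a, b⟩
    simp only [mem_filter, mem_product, mem_singleton, mem_sdiff, mem_range]
    omega
  rw [shuffleSign, this, card_product, card_range, card_singleton, mul_one]

section Faces

variable {Y X : Type*}

lemma face0_length (q : Y × List X) {i : ℕ} (hi : i < q.2.length) :
    (face0 q i).2.length = q.2.length - 1 := by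
  simp [face0, List.length_eraseIdx_of_lt hi]

lemma face1_length (star : Y → X → Y) (act : X → X → X) (q : Y × List X) {i : ℕ}
    (hi : i < q.2.length) :
    (face1 star act q i).2.length = q.2.length - 1 := by
  simp only [face1, List.getElem?_eq_getElem hi, List.length_append, List.length_map,
    List.length_take, List.length_drop]
  omega

variable {f : Y × List X → ℕ → Y × List X}

lemma length_foldl_of_pairwise_gt
    (hf : ∀ q i, i < q.2.length → (f q i).2.length = q.2.length - 1)
    {l : List ℕ} (hl : l.Pairwise (· > ·)) (q : Y × List X) (hlq : ∀ j ∈ l, j < q.2.length) :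
    (l.foldl f q).2.length = q.2.length - l.length := by
  induction l generalizing q with
  | nil => simp
  | cons j l ih =>
    obtain ⟨hjl, hl⟩ := List.pairwise_cons.mp hl
    have hj : j < q.2.length := hlq j List.mem_cons_self
    rw [List.foldl_cons, ih hl _ fun r hr => by have := hjl r hr; rw [hf q j hj]; omega,
      hf q j hj, List.length_cons]
    omega

lemma multiFace_length (hf : ∀ q i, i < q.2.length → (f q i).2.length = q.2.length - 1)
    (S : Finset ℕ) (q : Y × List X) (hS : ∀ j ∈ S, j < q.2.length) :
    (multiFace f S q).2.length = q.2.length - #S := by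
  rw [multiFace, length_foldl_of_pairwise_gt hf
    (List.pairwise_reverse.mpr (Finset.sortedLT_sort S).pairwise) q
    (fun j hj => hS j (by simpa using hj))]
  simp

lemma multiFace_range_sdiff_singleton_length
    (hf : ∀ q i, i < q.2.length → (f q i).2.length = q.2.length - 1)
    {n i : ℕ} (hi : i < n + 1) (q : Y × List X) (hq : q.2.length = n + 1) :
    (multiFace f (range (n + 1) \ {i}) q).2.length = 1 := by
  rw [multiFace_length hf _ q fun j hj => hq ▸ mem_range.mp (mem_sdiff.mp hj).1, hq,
    card_sdiff_of_subset (by simpa using hi), card_range, card_singleton]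
  omega

end Faces

lemma multiFace_singleton {Y X : Type*} (f : Y × List X → ℕ → Y × List X) (i : ℕ)
    (q : Y × List X) : multiFace f {i} q = f q i := by
  simp [multiFace]

-- The cochain `Λ = P(𝟏)`.
def unitCochain {Y X : Type*} (A : Type*) [Zero A] [One A] (r : Y × List X) : A :=
  if r.2.length = 1 then 1 else 0

section Cup

variable {Y X A : Type*} [CommRing A] (star : Y → X → Y) (act : X → X → X)

lemma cup_unitCochain_right {k : ℕ} (F : Y × List X → A) (q : Y × List X)
    (hq : q.2.length = k + 1) :
    cup star act k 1 F (unitCochain A) q = ∑ i ∈ range (k + 1), (-1) ^ i * F (face0 q i) := by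
  rw [cup, powersetCard_one, sum_map, mul_sum]
  refine sum_congr rfl fun i hi => ?_
  have hi : i < k + 1 := mem_range.mp hi
  have hΛ : unitCochain A (multiFace (face1 star act) (range (k + 1) \ {i}) q) = 1 :=
    if_pos (multiFace_range_sdiff_singleton_length (face1_length star act) hi q hq)
  simp only [Function.Embedding.coeFn_mk, multiFace_singleton, hΛ,
    shuffleSign_singleton_range_sdiff hi, mul_one, Int.cast_pow, Int.cast_neg, Int.cast_one,
    ← mul_assoc, Nat.add_sub_cancel, neg_one_pow_mul_neg_one_pow_sub (Nat.le_of_lt_succ hi)]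

lemma cup_unitCochain_left {m : ℕ} (G : Y × List X → A) (q : Y × List X)
    (hq : q.2.length = m + 1) :
    cup star act 1 m (unitCochain A) G q =
      (-1) ^ m * ∑ i ∈ range (m + 1), (-1) ^ i * G (face1 star act q i) := by
  rw [cup, one_mul, add_comm 1 m, sum_powersetCard_of_card_eq_succ (card_range _)]
  congr 1
  refine sum_congr rfl fun i hi => ?_
  have hi : i < m + 1 := mem_range.mp hi
  have hΛ : unitCochain A (multiFace face0 (range (m + 1) \ {i}) q) = 1 :=
    if_pos (multiFace_range_sdiff_singleton_length (fun r _ => face0_length r) hi q hq)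
  rw [Finset.sdiff_sdiff_eq_self (singleton_subset_iff.mpr (mem_range.mpr hi)),
    multiFace_singleton, hΛ, shuffleSign_range_sdiff_singleton hi, one_mul]
  push_cast
  rfl

lemma cup_unitCochain_unitCochain (q : Y × List X) (hq : q.2.length = 2) :
    cup star act 1 1 (unitCochain A) (unitCochain A) q = 0 := by
  have hΛ : ∀ i < 2, unitCochain A (face0 q i) = 1 := fun i hi =>
    if_pos (by rw [face0_length q (hq ▸ hi), hq])
  rw [cup_unitCochain_right star act _ q hq, sum_range_succ, sum_range_one, hΛ 0 (by norm_num),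
    hΛ 1 (by norm_num)]
  ring

end Cup

theorem stmt_10_general {Y X A : Type*} [CommRing A] (star : Y → X → Y) (act : X → X → X) :
    (∀ q : Y × List X, q.2.length = 2 →
      cup star act 1 1 (fun r : Y × List X => if r.2.length = 1 then (1 : A) else 0)
        (fun r : Y × List X => if r.2.length = 1 then (1 : A) else 0) q = 0) ∧
    (∀ n : ℕ, 1 ≤ n → ∀ F : Y × List X → A, ∀ q : Y × List X, q.2.length = n →
      (∑ i ∈ Finset.range n, (-1 : A) ^ (i + 1) * F (face0 q i)) =
          -(cup star act (n - 1) 1 F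
              (fun r : Y × List X => if r.2.length = 1 then (1 : A) else 0) q) ∧
      (∑ i ∈ Finset.range n, (-1 : A) ^ (i + 1) * F (face1 star act q i)) =
          (-1 : A) ^ n *
            cup star act 1 (n - 1)
              (fun r : Y × List X => if r.2.length = 1 then (1 : A) else 0) F q) := by
  refine ⟨cup_unitCochain_unitCochain star act, fun n hn F q hq => ?_⟩
  obtain ⟨k, rfl⟩ := Nat.exists_eq_add_of_le' hn
  rw [Nat.add_sub_cancel]
  constructor
  · have hright := cup_unitCochain_right star act F q hq
    unfold unitCochain at hright
    rw [hright, ← sum_neg_distrib]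
    simp only [pow_succ, mul_neg_one, neg_mul]
  · have hleft := cup_unitCochain_left star act F q hq
    unfold unitCochain at hleft
    rw [hleft, ← mul_assoc, ← pow_add, mul_sum]
    refine sum_congr rfl fun i _ => ?_
    rw [show k + 1 + k = 2 * k + 1 by ring, Odd.neg_one_pow ⟨k, rfl⟩]
    ring

/-- With `Λ = P(𝟏) ∈ C¹` (so `Λ(y;x) = 1`), one has `Λ∪Λ = 0`, and for
`F ∈ C^{n-1}(Y;X)`: `∂⁰F = -F∪Λ` and `∂¹F = (-1)ⁿ Λ∪F`. -/
theorem stmt_10 {Y X A : Type*} [CommRing A] (star : Y → X → Y) (act : X → X → X)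
    (hbij : ∀ b : X, Function.Bijective fun a => act a b)
    (hdist : ∀ a b c : X, act (act a b) c = act (act a c) (act b c))
    (hstar_bij : ∀ b : X, Function.Bijective fun y : Y => star y b)
    (hstar : ∀ (y : Y) (b c : X), star (star y b) c = star (star y c) (act b c)) :
    (∀ q : Y × List X, q.2.length = 2 →
      cup star act 1 1 (fun r : Y × List X => if r.2.length = 1 then (1 : A) else 0)
        (fun r : Y × List X => if r.2.length = 1 then (1 : A) else 0) q = 0) ∧
    (∀ n : ℕ, 1 ≤ n → ∀ F : Y × List X → A, ∀ q : Y × List X, q.2.length = n →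
      (∑ i ∈ Finset.range n, (-1 : A) ^ (i + 1) * F (face0 q i)) =
          -(cup star act (n - 1) 1 F
              (fun r : Y × List X => if r.2.length = 1 then (1 : A) else 0) q) ∧
      (∑ i ∈ Finset.range n, (-1 : A) ^ (i + 1) * F (face1 star act q i)) =
          (-1 : A) ^ n *
            cup star act 1 (n - 1)
              (fun r : Y × List X => if r.2.length = 1 then (1 : A) else 0) F q) :=
  stmt_10_general star act
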